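/- Let φ be a formula of BndSCL. Then φ is valid under bounded semantics (true in every suitable model under every suitable assignment) if and only if the first-order approximant Φⁿ_φ is valid for some n ∈ ℕ. -/

import Mathlib

/-
Common formalization of the logics SCL (static computation logic, unbounded
game-theoretic semantics) and BndSCL (bounded semantics), following the paper
"First-order logic with self-reference".

* Games are played on arbitrary (possibly infinite) arenas; plays are maximal
  walks; strategies are functions from finite walks (histories) to positions;
  infinite plays, and finite plays ending at a dead end where `win` holds for
  neither player, are won by nobody.
* The semantic games are formalized with positions carrying the current
  (sub)formula, an environment binding each label symbol to the labelled
  formula it most recently named (this is the standard closure rendering of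
  "reference formula of a claim-symbol occurrence"), the current assignment
  and the polarity (+ = true, − = false).  The bounded game additionally
  carries a clock value.
-/

set_option autoImplicit false

universe u

/-! ## Generic two-player games on (possibly infinite) arenas -/

inductive Player : Type
  | eloise : Player
  | abelard : Player
deriving DecidableEq

def Player.opp : Player → Player
  | .eloise => .abelard
  | .abelard => .eloise

/-- A game arena: an ownership function (corresponding to the partition
`V = V₀ ∪ V₁`), an edge relation, and a predicate telling which player (if
any) wins a play ending at a given dead-end position. -/
structure GameArena (P : Type u) where
  turn : P → Player
  edge : P → P → Prop
  win : P → Player → Prop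

namespace GameArena

variable {P : Type u} (A : GameArena P)

def DeadEnd (u : P) : Prop := ∀ x, ¬ A.edge u x

/-- `w` is a finite nonempty walk whose first element is `v`. -/
def IsWalkFrom (v : P) (w : List P) : Prop :=
  w.head? = some v ∧ List.Chain' A.edge w

/-- A finite (maximal) play from `v`: a walk whose last element is a dead end. -/
def IsFinitePlay (v : P) (w : List P) : Prop :=
  A.IsWalkFrom v w ∧ ∀ u, w.getLast? = some u → A.DeadEnd u

/-- An infinite play from `v`. -/
def IsInfPlay (v : P) (f : ℕ → P) : Prop :=
  f 0 = v ∧ ∀ n, A.edge (f n) (f (n + 1))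

/-- A strategy (a function from histories to positions) of player `pl` is
legal if it always prescribes a move along an edge whenever a move exists. -/
def LegalFor (pl : Player) (v : P) (σ : List P → P) : Prop :=
  ∀ w u, A.IsWalkFrom v w → w.getLast? = some u → A.turn u = pl →
    (∃ x, A.edge u x) → A.edge u (σ w)

/-- The strategy `σ` of player `pl` is followed in the finite play `w`. -/
def FollowsFin (pl : Player) (σ : List P → P) (w : List P) : Prop :=
  ∀ q u x, (q ++ [x]) <+: w → q.getLast? = some u → A.turn u = pl → x = σ q

/-- The strategy `σ` of player `pl` is followed in the infinite play `f`. -/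
def FollowsInf (pl : Player) (σ : List P → P) (f : ℕ → P) : Prop :=
  ∀ n, A.turn (f n) = pl →
    f (n + 1) = σ (List.ofFn fun i : Fin (n + 1) => f i)

/-- `σ` is a winning strategy of player `pl` from `v`: it is legal, every
finite maximal play following it ends in a dead end won by `pl`, and no
infinite play follows it (infinite plays are won by neither player). -/
def WinningStrategy (pl : Player) (v : P) (σ : List P → P) : Prop :=
  A.LegalFor pl v σ ∧
  (∀ w, A.IsFinitePlay v w → A.FollowsFin pl σ w →
      ∃ u, w.getLast? = some u ∧ A.win u pl) ∧
  (∀ f, A.IsInfPlay v f → ¬ A.FollowsInf pl σ f)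

def HasWinningStrategy (pl : Player) (v : P) : Prop :=
  ∃ σ : List P → P, A.WinningStrategy pl v σ

end GameArena

/-- A positional strategy: its moves depend only on the current position. -/
def Positional {P : Type u} (σ : List P → P) : Prop :=
  ∀ q q' : List P, q.getLast? = q'.getLast? → σ q = σ q'

/-! ## Syntax of SCL / BndSCL -/

/-- A purely relational vocabulary. -/
structure Vocab : Type 1 where
  Rel : Type
  arity : Rel → ℕ

/-- Formulas of SCL / BndSCL over the vocabulary `V`.  Variables and label
symbols are natural numbers; `claim L` is the claim symbol `C_L` and
`lab L φ` is the labelled formula `L φ`. -/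
inductive SCLFormula (V : Vocab) : Type
  | bot : SCLFormula V
  | eq (x y : ℕ) : SCLFormula V
  | rel (R : V.Rel) (args : Fin (V.arity R) → ℕ) : SCLFormula V
  | claim (L : ℕ) : SCLFormula V
  | not (φ : SCLFormula V) : SCLFormula V
  | and (φ ψ : SCLFormula V) : SCLFormula V
  | or (φ ψ : SCLFormula V) : SCLFormula V
  | ex (x : ℕ) (φ : SCLFormula V) : SCLFormula V
  | all (x : ℕ) (φ : SCLFormula V) : SCLFormula V
  | lab (L : ℕ) (φ : SCLFormula V) : SCLFormula V

namespace SCLFormula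

variable {V : Vocab}

/-- First-order atoms. -/
def IsFOAtom : SCLFormula V → Prop
  | .bot => True
  | .eq _ _ => True
  | .rel _ _ => True
  | _ => False

/-- Purely first-order formulas (no claim symbols, no label symbols). -/
def IsFO : SCLFormula V → Prop
  | .bot => True
  | .eq _ _ => True
  | .rel _ _ => True
  | .claim _ => False
  | .not φ => IsFO φ
  | .and φ ψ => IsFO φ ∧ IsFO ψ
  | .or φ ψ => IsFO φ ∧ IsFO ψ
  | .ex _ φ => IsFO φ
  | .all _ φ => IsFO φ
  | .lab _ _ => False

/-- Free (individual) variables. -/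
def freeVars : SCLFormula V → Finset ℕ
  | .bot => ∅
  | .eq x y => {x, y}
  | .rel _ a => Finset.image a Finset.univ
  | .claim _ => ∅
  | .not φ => freeVars φ
  | .and φ ψ => freeVars φ ∪ freeVars ψ
  | .or φ ψ => freeVars φ ∪ freeVars ψ
  | .ex x φ => freeVars φ \ {x}
  | .all x φ => freeVars φ \ {x}
  | .lab _ φ => freeVars φ

/-- All variables occurring in a formula (free or bound). -/
def vars : SCLFormula V → Finset ℕ
  | .bot => ∅
  | .eq x y => {x, y}
  | .rel _ a => Finset.image a Finset.univ
  | .claim _ => ∅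
  | .not φ => vars φ
  | .and φ ψ => vars φ ∪ vars ψ
  | .or φ ψ => vars φ ∪ vars ψ
  | .ex x φ => insert x (vars φ)
  | .all x φ => insert x (vars φ)
  | .lab _ φ => vars φ

/-- Sentences: formulas with no free variables. -/
def IsSentence (φ : SCLFormula V) : Prop := freeVars φ = ∅

end SCLFormula

/-! ## Structures and first-order (Tarski) satisfaction -/

/-- A (suitable) model for vocabulary `V`: a nonempty domain together with an
interpretation of all relation symbols. -/
structure Struct (V : Vocab) where
  Dom : Type u
  dom_nonempty : Nonempty Dom
  interp : ∀ R : V.Rel, (Fin (V.arity R) → Dom) → Prop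

attribute [instance] Struct.dom_nonempty

/-- Satisfaction of atoms (false on non-atoms). -/
def atomSat {V : Vocab} (M : Struct.{u} V) (s : ℕ → M.Dom) : SCLFormula V → Prop
  | .bot => False
  | .eq x y => s x = s y
  | .rel R a => M.interp R fun i => s (a i)
  | _ => False

/-- Standard (Tarski) first-order satisfaction.  It is only meaningful on
purely first-order formulas; claim symbols are interpreted as `False` and
label symbols are ignored. -/
def FOSat {V : Vocab} (M : Struct.{u} V) : (ℕ → M.Dom) → SCLFormula V → Prop
  | _, .bot => False
  | s, .eq x y => s x = s y
  | s, .rel R a => M.interp R fun i => s (a i)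
  | _, .claim _ => False
  | s, .not φ => ¬ FOSat M s φ
  | s, .and φ ψ => FOSat M s φ ∧ FOSat M s ψ
  | s, .or φ ψ => FOSat M s φ ∨ FOSat M s ψ
  | s, .ex x φ => ∃ a : M.Dom, FOSat M (Function.update s x a) φ
  | s, .all x φ => ∀ a : M.Dom, FOSat M (Function.update s x a) φ
  | s, .lab _ φ => FOSat M s φ

/-! ## The evaluation games -/

/-- A position of the semantic game: the current formula, the environment
recording for each label symbol `L` the reference formula `L ψ` it currently
names, the current assignment, and the polarity (`true` = `+`). -/
structure SCLPos (V : Vocab) (D : Type u) : Type u where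
  form : SCLFormula V
  env : ℕ → Option (SCLFormula V)
  asg : ℕ → D
  pol : Bool

/-- Which player moves at a given position. (At positions with at most one
successor the owner is irrelevant; we let Eloise own them.) -/
def posTurn {V : Vocab} {D : Type u} (p : SCLPos V D) : Player :=
  match p.form, p.pol with
  | .and _ _, true => .abelard
  | .and _ _, false => .eloise
  | .or _ _, true => .eloise
  | .or _ _, false => .abelard
  | .all _ _, true => .abelard
  | .all _ _, false => .eloise
  | .ex _ _, true => .eloise
  | .ex _ _, false => .abelard
  | _, _ => .eloise

/-- Who wins a play ending at a given position: at an FO-atom position,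
Eloise wins iff the atom's truth value agrees with the polarity, and Abelard
wins otherwise; plays ending anywhere else (e.g. at a claim symbol with no
reference formula, or with clock value 0) are won by neither player. -/
def posWin {V : Vocab} (M : Struct.{u} V) (p : SCLPos V M.Dom) : Player → Prop
  | .eloise => p.form.IsFOAtom ∧ (atomSat M p.asg p.form ↔ p.pol = true)
  | .abelard => p.form.IsFOAtom ∧ ¬ (atomSat M p.asg p.form ↔ p.pol = true)

/-- Moves of the unbounded evaluation game `G_∞`. -/
inductive UStep {V : Vocab} (M : Struct.{u} V) :
    SCLPos V M.Dom → SCLPos V M.Dom → Prop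
  | neg (φ : SCLFormula V) (e : ℕ → Option (SCLFormula V)) (s : ℕ → M.Dom) (b : Bool) :
      UStep M ⟨.not φ, e, s, b⟩ ⟨φ, e, s, !b⟩
  | andLeft (φ ψ : SCLFormula V) (e : ℕ → Option (SCLFormula V)) (s : ℕ → M.Dom) (b : Bool) :
      UStep M ⟨.and φ ψ, e, s, b⟩ ⟨φ, e, s, b⟩
  | andRight (φ ψ : SCLFormula V) (e : ℕ → Option (SCLFormula V)) (s : ℕ → M.Dom) (b : Bool) :
      UStep M ⟨.and φ ψ, e, s, b⟩ ⟨ψ, e, s, b⟩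
  | orLeft (φ ψ : SCLFormula V) (e : ℕ → Option (SCLFormula V)) (s : ℕ → M.Dom) (b : Bool) :
      UStep M ⟨.or φ ψ, e, s, b⟩ ⟨φ, e, s, b⟩
  | orRight (φ ψ : SCLFormula V) (e : ℕ → Option (SCLFormula V)) (s : ℕ → M.Dom) (b : Bool) :
      UStep M ⟨.or φ ψ, e, s, b⟩ ⟨ψ, e, s, b⟩
  | exStep (x : ℕ) (φ : SCLFormula V) (e : ℕ → Option (SCLFormula V)) (s : ℕ → M.Dom)
      (b : Bool) (a : M.Dom) :
      UStep M ⟨.ex x φ, e, s, b⟩ ⟨φ, e, Function.update s x a, b⟩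
  | allStep (x : ℕ) (φ : SCLFormula V) (e : ℕ → Option (SCLFormula V)) (s : ℕ → M.Dom)
      (b : Bool) (a : M.Dom) :
      UStep M ⟨.all x φ, e, s, b⟩ ⟨φ, e, Function.update s x a, b⟩
  | labStep (L : ℕ) (φ : SCLFormula V) (e : ℕ → Option (SCLFormula V)) (s : ℕ → M.Dom)
      (b : Bool) :
      UStep M ⟨.lab L φ, e, s, b⟩ ⟨φ, Function.update e L (some (.lab L φ)), s, b⟩
  | claimStep (L : ℕ) (e : ℕ → Option (SCLFormula V)) (s : ℕ → M.Dom) (b : Bool)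
      (χ : SCLFormula V) (h : e L = some χ) :
      UStep M ⟨.claim L, e, s, b⟩ ⟨χ, e, s, b⟩

/-- Moves of the `n`-bounded evaluation game: positions additionally carry a
clock value, which decreases by one exactly at jumps from a claim symbol to
its reference formula; a claim-symbol position with clock value `0` is a dead
end won by neither player. -/
inductive BStep {V : Vocab} (M : Struct.{u} V) :
    SCLPos V M.Dom × ℕ → SCLPos V M.Dom × ℕ → Prop
  | neg (φ : SCLFormula V) (e : ℕ → Option (SCLFormula V)) (s : ℕ → M.Dom) (b : Bool) (n : ℕ) :
      BStep M (⟨.not φ, e, s, b⟩, n) (⟨φ, e, s, !b⟩, n)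
  | andLeft (φ ψ : SCLFormula V) (e : ℕ → Option (SCLFormula V)) (s : ℕ → M.Dom) (b : Bool)
      (n : ℕ) : BStep M (⟨.and φ ψ, e, s, b⟩, n) (⟨φ, e, s, b⟩, n)
  | andRight (φ ψ : SCLFormula V) (e : ℕ → Option (SCLFormula V)) (s : ℕ → M.Dom) (b : Bool)
      (n : ℕ) : BStep M (⟨.and φ ψ, e, s, b⟩, n) (⟨ψ, e, s, b⟩, n)
  | orLeft (φ ψ : SCLFormula V) (e : ℕ → Option (SCLFormula V)) (s : ℕ → M.Dom) (b : Bool)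
      (n : ℕ) : BStep M (⟨.or φ ψ, e, s, b⟩, n) (⟨φ, e, s, b⟩, n)
  | orRight (φ ψ : SCLFormula V) (e : ℕ → Option (SCLFormula V)) (s : ℕ → M.Dom) (b : Bool)
      (n : ℕ) : BStep M (⟨.or φ ψ, e, s, b⟩, n) (⟨ψ, e, s, b⟩, n)
  | exStep (x : ℕ) (φ : SCLFormula V) (e : ℕ → Option (SCLFormula V)) (s : ℕ → M.Dom)
      (b : Bool) (n : ℕ) (a : M.Dom) :
      BStep M (⟨.ex x φ, e, s, b⟩, n) (⟨φ, e, Function.update s x a, b⟩, n)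
  | allStep (x : ℕ) (φ : SCLFormula V) (e : ℕ → Option (SCLFormula V)) (s : ℕ → M.Dom)
      (b : Bool) (n : ℕ) (a : M.Dom) :
      BStep M (⟨.all x φ, e, s, b⟩, n) (⟨φ, e, Function.update s x a, b⟩, n)
  | labStep (L : ℕ) (φ : SCLFormula V) (e : ℕ → Option (SCLFormula V)) (s : ℕ → M.Dom)
      (b : Bool) (n : ℕ) :
      BStep M (⟨.lab L φ, e, s, b⟩, n) (⟨φ, Function.update e L (some (.lab L φ)), s, b⟩, n)
  | claimStep (L : ℕ) (e : ℕ → Option (SCLFormula V)) (s : ℕ → M.Dom) (b : Bool)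
      (χ : SCLFormula V) (n : ℕ) (h : e L = some χ) :
      BStep M (⟨.claim L, e, s, b⟩, n + 1) (⟨χ, e, s, b⟩, n)

/-- The unbounded evaluation game `G_∞(𝔄, ·, ·)` as a game arena. -/
def gameU {V : Vocab} (M : Struct.{u} V) : GameArena (SCLPos V M.Dom) where
  turn := posTurn
  edge := UStep M
  win := posWin M

/-- The bounded evaluation games `G_n(𝔄, ·, ·)` (for all clock values `n`
simultaneously) as a game arena. -/
def gameB {V : Vocab} (M : Struct.{u} V) : GameArena (SCLPos V M.Dom × ℕ) where
  turn p := posTurn p.1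
  edge := BStep M
  win p := posWin M p.1

/-- The initial position of the evaluation game for `φ` under assignment `s`:
empty environment and positive polarity. -/
def initPos {V : Vocab} {D : Type u} (φ : SCLFormula V) (s : ℕ → D) : SCLPos V D :=
  ⟨φ, fun _ => none, s, true⟩

/-- Truth under the unbounded semantics (the logic SCL):
`𝔄,s ⊨ φ` iff Eloise has a winning strategy in `G_∞(𝔄,s,φ)`. -/
def SCLTrue {V : Vocab} (M : Struct.{u} V) (s : ℕ → M.Dom) (φ : SCLFormula V) : Prop :=
  (gameU M).HasWinningStrategy .eloise (initPos φ s)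

/-! ### The bounded game `G_ω` -/

/-- Positions of the game `G_ω`: the initial position (where Abelard picks a
number `n'`), the intermediate positions (where Eloise picks some `n ≥ n'`),
and the positions of the `n`-bounded games. -/
inductive GOPos (V : Vocab) (D : Type u) : Type u
  | start : GOPos V D
  | mid (n' : ℕ) : GOPos V D
  | inner (p : SCLPos V D) (clock : ℕ) : GOPos V D

inductive GOStep {V : Vocab} (M : Struct.{u} V) (φ : SCLFormula V) (s : ℕ → M.Dom) :
    GOPos V M.Dom → GOPos V M.Dom → Prop
  | abelardPick (n' : ℕ) : GOStep M φ s .start (.mid n')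
  | eloisePick (n' n : ℕ) (h : n' ≤ n) : GOStep M φ s (.mid n') (.inner (initPos φ s) n)
  | play (p q : SCLPos V M.Dom) (m k : ℕ) (h : BStep M (p, m) (q, k)) :
      GOStep M φ s (.inner p m) (.inner q k)

def goTurn {V : Vocab} {D : Type u} : GOPos V D → Player
  | .start => .abelard
  | .mid _ => .eloise
  | .inner p _ => posTurn p

def goWin {V : Vocab} (M : Struct.{u} V) : GOPos V M.Dom → Player → Prop
  | .inner p _, pl => posWin M p pl
  | _, _ => False

/-- The bounded evaluation game `G_ω(𝔄,s,φ)`: Abelard picks `n' ∈ ℕ`, then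
Eloise picks `n ≥ n'`, and then `G_n(𝔄,s,φ)` is played. -/
def gameOmega {V : Vocab} (M : Struct.{u} V) (φ : SCLFormula V) (s : ℕ → M.Dom) :
    GameArena (GOPos V M.Dom) where
  turn := goTurn
  edge := GOStep M φ s
  win := goWin M

/-- Truth under the bounded semantics (the logic BndSCL):
`𝔄,s ⊨_ω φ` iff Eloise has a winning strategy in `G_ω(𝔄,s,φ)`. -/
def BndTrue {V : Vocab} (M : Struct.{u} V) (s : ℕ → M.Dom) (φ : SCLFormula V) : Prop :=
  (gameOmega M φ s).HasWinningStrategy .eloise .start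

/-! ## Approximants -/

/-- Auxiliary structural recursion for approximants: `k` tells what to put in
place of a claim symbol.  Label symbols are deleted (while updating the
environment), and polarity is tracked through negations. -/
def approxCore {V : Vocab}
    (k : (ℕ → Option (SCLFormula V)) → Bool → ℕ → SCLFormula V) :
    (ℕ → Option (SCLFormula V)) → Bool → SCLFormula V → SCLFormula V
  | _, _, .bot => .bot
  | _, _, .eq x y => .eq x y
  | _, _, .rel R a => .rel R a
  | e, b, .claim L => k e b L
  | e, b, .not φ => .not (approxCore k e (!b) φ)
  | e, b, .and φ ψ => .and (approxCore k e b φ) (approxCore k e b ψ)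
  | e, b, .or φ ψ => .or (approxCore k e b φ) (approxCore k e b ψ)
  | e, b, .ex x φ => .ex x (approxCore k e b φ)
  | e, b, .all x φ => .all x (approxCore k e b φ)
  | e, b, .lab L φ => approxCore k (Function.update e L (some (.lab L φ))) b φ

/-- `approx n e b φ` unfolds each claim symbol of `φ` (in environment `e`,
under polarity `b`) through `n` jumps to reference formulas; claim symbols
reached with exhausted budget (or with no reference formula) are replaced by
`⊥` at positive occurrences and `⊤` (i.e. `¬⊥`) at negative occurrences, and
all label symbols are deleted. -/
def approx {V : Vocab} : ℕ → (ℕ → Option (SCLFormula V)) → Bool → SCLFormula V → SCLFormula V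
  | 0 => approxCore fun _ b _ => if b then .bot else .not .bot
  | n + 1 => approxCore fun e b L =>
      match e L with
      | some χ => approx n e b χ
      | none => if b then .bot else .not .bot

/-- The `n`-th approximant `Φⁿ_φ` of `φ`: the first-order formula obtained
from the `n`-th unfolding of `φ` by deleting all label symbols and replacing
positive claim occurrences by `⊥` and negative ones by `⊤`. -/
def approximant {V : Vocab} (φ : SCLFormula V) (n : ℕ) : SCLFormula V :=
  approx n (fun _ => none) true φ

/-- Validity under bounded semantics: true in every suitable model under
every suitable assignment. -/
def BndValid {V : Vocab} (φ : SCLFormula V) : Prop :=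
  ∀ (M : Struct.{u} V) (s : ℕ → M.Dom), BndTrue M s φ

/-- Validity under unbounded semantics. -/
def SCLValid {V : Vocab} (φ : SCLFormula V) : Prop :=
  ∀ (M : Struct.{u} V) (s : ℕ → M.Dom), SCLTrue M s φ

/-- First-order validity. -/
def FOValid {V : Vocab} (φ : SCLFormula V) : Prop :=
  ∀ (M : Struct.{u} V) (s : ℕ → M.Dom), FOSat M s φ

/-!
In the bounded game every jump to a reference formula costs one unit of clock and every other
move shrinks the current formula, so all plays of `G_ω` are finite and Eloise's winning region is
the unique solution of the one-step equations of the game.  The `n`-th approximant, read with the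
polarity of the position, satisfies exactly these equations at clock value `n`; hence
`𝔄,s ⊨_ω φ` iff `Φⁿ_φ` holds in `𝔄,s` for some `n`, the approximants growing with `n`.
Validity of some single `Φⁿ_φ` then follows by compactness (an ultraproduct of countermodels).
-/

namespace GameArena

variable {P : Type u} {A : GameArena P}

theorem IsWalkFrom.cons {v x : P} {w : List P} (hvx : A.edge v x) (hw : A.IsWalkFrom x w) :
    A.IsWalkFrom v (v :: w) := by
  refine ⟨rfl, List.isChain_cons.2 ⟨fun y hy => ?_, hw.2⟩⟩
  rw [hw.1, Option.mem_some_iff] at hy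
  exact hy ▸ hvx

theorem IsWalkFrom.ne_nil {v : P} {w : List P} (hw : A.IsWalkFrom v w) : w ≠ [] := by
  rintro rfl
  exact absurd hw.1 (by simp)

theorem followsFin_cons {pl : Player} {σ : List P → P} {v x : P} {w : List P}
    (hw : w.head? = some x) (hmv : A.turn v = pl → x = σ [v])
    (hfol : A.FollowsFin pl (fun q => σ (v :: q)) w) : A.FollowsFin pl σ (v :: w) := by
  rintro (_ | ⟨a, q⟩) u y hpre hlast hturn
  · simp at hlast
  obtain ⟨rfl, hpre'⟩ := List.cons_prefix_cons.1 hpre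
  rcases q with _ | ⟨b, q⟩
  · obtain ⟨t, rfl⟩ := hpre'
    simp only [List.getLast?_singleton, Option.some.injEq, List.append_eq, List.nil_append,
      List.cons_append, List.head?_cons] at hlast hw
    exact hw ▸ hmv (hlast ▸ hturn)
  · rw [List.getLast?_cons_cons] at hlast
    exact hfol (b :: q) u y hpre' hlast hturn

theorem WinningStrategy.tail {pl : Player} {v x : P} {σ : List P → P}
    (h : A.WinningStrategy pl v σ) (hvx : A.edge v x) (hmv : A.turn v = pl → x = σ [v]) :
    A.WinningStrategy pl x (fun w => σ (v :: w)) := by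
  refine ⟨fun w u hw hlast => ?_, fun w hwp hfol => ?_, fun f hf hfol => ?_⟩
  · rw [← List.getLast?_cons_of_ne_nil hw.ne_nil] at hlast
    exact h.1 (v :: w) u (hw.cons hvx) hlast
  · have hne := hwp.1.ne_nil
    have hplay : A.IsFinitePlay v (v :: w) :=
      ⟨hwp.1.cons hvx, fun u hu => hwp.2 u (by rwa [List.getLast?_cons_of_ne_nil hne] at hu)⟩
    obtain ⟨u, hu, hwin⟩ := h.2.1 (v :: w) hplay (followsFin_cons hwp.1.1 hmv hfol)
    exact ⟨u, by rwa [List.getLast?_cons_of_ne_nil hne] at hu, hwin⟩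
  · let g : ℕ → P := fun n => n.casesOn v f
    refine h.2.2 g ⟨rfl, ?_⟩ ?_
    · rintro (_ | n)
      exacts [show A.edge v (f 0) from hf.1 ▸ hvx, hf.2 n]
    · rintro (_ | n) hturn
      · simpa [g, hf.1] using hmv hturn
      · have hlist : List.ofFn (fun i : Fin (n + 2) => g i) =
            v :: List.ofFn (fun i : Fin (n + 1) => f i) :=
          List.ofFn_succ
        simpa [g, hlist] using hfol n hturn

theorem WinningStrategy.win_of_deadEnd {pl : Player} {v : P} {σ : List P → P}
    (h : A.WinningStrategy pl v σ) (hd : A.DeadEnd v) : A.win v pl := by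
  have hfol : A.FollowsFin pl σ [v] := by
    rintro (_ | ⟨a, q⟩) u x hpre hlast
    · simp at hlast
    · simpa using hpre.length_le
  obtain ⟨u, hu, hwin⟩ := h.2.1 [v] ⟨⟨rfl, List.isChain_singleton v⟩, by simpa using hd⟩ hfol
  rw [List.getLast?_singleton, Option.some.injEq] at hu
  rwa [hu]

theorem WinningStrategy.edge_of_turn {pl : Player} {v : P} {σ : List P → P}
    (h : A.WinningStrategy pl v σ) (hturn : A.turn v = pl) (hex : ∃ x, A.edge v x) :
    A.edge v (σ [v]) :=
  h.1 [v] v ⟨rfl, List.isChain_singleton v⟩ rfl hturn hex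

theorem not_isInfPlay (hwf : WellFounded (flip A.edge)) {v : P} {f : ℕ → P} :
    ¬ A.IsInfPlay v f := fun hf =>
  have : IsWellFounded P (flip A.edge) := ⟨hwf⟩
  (WellFounded.not_rel_apply_succ (r := flip A.edge) f).elim fun n hn => hn (hf.2 n)

theorem invariant_of_followsFin {pl : Player} {I : P → Prop} {mv : P → P} {v₀ : P} (h0 : I v₀)
    (hmv : ∀ u x, I u → A.turn u = pl → A.edge u x → I (mv u))
    (hother : ∀ u x, I u → A.turn u ≠ pl → A.edge u x → I x) (w : List P) :
    ∀ u, A.IsWalkFrom v₀ w → A.FollowsFin pl (fun q => mv (q.getLast?.getD v₀)) w →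
      w.getLast? = some u → I u := by
  induction w using List.reverseRecOn with
  | nil => intro u hw; exact absurd hw.1 (by simp)
  | append_singleton q x ih =>
    intro u hw hfol hu
    rw [List.getLast?_concat, Option.some.injEq] at hu
    subst hu
    cases hq : q.getLast? with
    | none =>
      rw [List.getLast?_eq_none_iff] at hq
      subst hq
      obtain rfl : x = v₀ := by simpa using hw.1
      exact h0
    | some y =>
      have hne : q ≠ [] := by rintro rfl; simp at hq
      obtain ⟨hchain, -, hlink⟩ := List.isChain_append.1 hw.2
      have hyx : A.edge y x := hlink y hq x rfl
      have hIy : I y := ih y ⟨(List.head?_append_of_ne_nil q hne).symm.trans hw.1, hchain⟩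
        (fun q' u' y' hpre => hfol q' u' y' (hpre.trans (q.prefix_append [x]))) hq
      by_cases hturn : A.turn y = pl
      · have hx := hfol q y x (List.prefix_refl _) hq hturn
        simp only [hq, Option.getD_some] at hx
        exact hx ▸ hmv y x hIy hturn hyx
      · exact hother y x hIy hturn hyx

theorem hasWinningStrategy_of_invariant (hwf : WellFounded (flip A.edge)) (I : P → Prop)
    (hdead : ∀ v, I v → A.DeadEnd v → A.win v .eloise)
    (heloise : ∀ v, I v → A.turn v = .eloise → (∃ x, A.edge v x) → ∃ x, A.edge v x ∧ I x)
    (habelard : ∀ v x, I v → A.turn v ≠ .eloise → A.edge v x → I x)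
    {v₀ : P} (h0 : I v₀) : A.HasWinningStrategy .eloise v₀ := by
  have : Nonempty P := ⟨v₀⟩
  let mv : P → P := fun u => Classical.epsilon fun x => A.edge u x ∧ (I u → I x)
  have hmv : ∀ u, A.turn u = .eloise → (∃ x, A.edge u x) →
      A.edge u (mv u) ∧ (I u → I (mv u)) := by
    intro u hturn hex
    refine Classical.epsilon_spec (p := fun x => A.edge u x ∧ (I u → I x)) ?_
    by_cases hu : I u
    · obtain ⟨x, hx, hIx⟩ := heloise u hu hturn hex
      exact ⟨x, hx, fun _ => hIx⟩
    · obtain ⟨x, hx⟩ := hex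
      exact ⟨x, hx, fun h => (hu h).elim⟩
  refine ⟨fun q => mv (q.getLast?.getD v₀), fun w u _ hu hturn hex => ?_,
    fun w hwp hfol => ?_, fun f hf _ => not_isInfPlay hwf hf⟩
  · simpa [hu] using (hmv u hturn hex).1
  · obtain ⟨u, hu⟩ := Option.ne_none_iff_exists'.1 (mt List.getLast?_eq_none_iff.1 hwp.1.ne_nil)
    have hIu := invariant_of_followsFin h0 (fun u x hu ht hx => (hmv u ht ⟨x, hx⟩).2 hu)
      habelard w u hwp.1 hfol hu
    exact ⟨u, hu, hdead u hIu (hwp.2 u hu)⟩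

theorem hasWinningStrategy_eloise_iff (hwf : WellFounded (flip A.edge)) (W : P → Prop)
    (hdead : ∀ v, A.DeadEnd v → (W v ↔ A.win v .eloise))
    (heloise : ∀ v, A.turn v = .eloise → (∃ x, A.edge v x) → (W v ↔ ∃ x, A.edge v x ∧ W x))
    (habelard : ∀ v, A.turn v ≠ .eloise → (W v ↔ ∀ x, A.edge v x → W x)) (v : P) :
    A.HasWinningStrategy .eloise v ↔ W v := by
  refine ⟨fun h => ?_, hasWinningStrategy_of_invariant hwf W (fun v hv hd => (hdead v hd).1 hv)
    (fun v hv ht hex => (heloise v ht hex).1 hv) (fun v x hv ht hx => (habelard v ht).1 hv x hx)⟩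
  induction v using hwf.induction with
  | _ v ih =>
    obtain ⟨σ, hσ⟩ := h
    by_cases hd : A.DeadEnd v
    · exact (hdead v hd).2 (hσ.win_of_deadEnd hd)
    have hex : ∃ x, A.edge v x := by simpa [DeadEnd] using hd
    by_cases ht : A.turn v = .eloise
    · have hx := hσ.edge_of_turn ht hex
      exact (heloise v ht hex).2 ⟨_, hx, ih _ hx ⟨_, hσ.tail hx fun _ => rfl⟩⟩
    · exact (habelard v ht).2 fun x hx => ih x hx ⟨_, hσ.tail hx fun h => absurd h ht⟩

end GameArena

section

variable {V : Vocab}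

section Approx

variable (n : ℕ) (e : ℕ → Option (SCLFormula V)) (b : Bool)

@[simp] theorem approx_bot : approx n e b (.bot : SCLFormula V) = .bot := by cases n <;> rfl

@[simp] theorem approx_eq (x y : ℕ) : approx n e b (.eq x y : SCLFormula V) = .eq x y := by
  cases n <;> rfl

@[simp] theorem approx_rel (R : V.Rel) (a : Fin (V.arity R) → ℕ) :
    approx n e b (.rel R a) = .rel R a := by cases n <;> rfl

@[simp] theorem approx_not (φ : SCLFormula V) :
    approx n e b (.not φ) = .not (approx n e (!b) φ) := by cases n <;> rfl

@[simp] theorem approx_and (φ ψ : SCLFormula V) :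
    approx n e b (.and φ ψ) = .and (approx n e b φ) (approx n e b ψ) := by cases n <;> rfl

@[simp] theorem approx_or (φ ψ : SCLFormula V) :
    approx n e b (.or φ ψ) = .or (approx n e b φ) (approx n e b ψ) := by cases n <;> rfl

@[simp] theorem approx_ex (x : ℕ) (φ : SCLFormula V) :
    approx n e b (.ex x φ) = .ex x (approx n e b φ) := by cases n <;> rfl

@[simp] theorem approx_all (x : ℕ) (φ : SCLFormula V) :
    approx n e b (.all x φ) = .all x (approx n e b φ) := by cases n <;> rfl

@[simp] theorem approx_lab (L : ℕ) (φ : SCLFormula V) :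
    approx n e b (.lab L φ) = approx n (Function.update e L (some (.lab L φ))) b φ := by
  cases n <;> rfl

@[simp] theorem approx_zero_claim (L : ℕ) :
    approx 0 e b (.claim L : SCLFormula V) = if b then .bot else .not .bot := rfl

@[simp] theorem approx_succ_claim (L : ℕ) :
    approx (n + 1) e b (.claim L : SCLFormula V) =
      (e L).elim (if b then .bot else .not .bot) (approx n e b) := by
  simp only [approx, approxCore]
  cases e L <;> rfl

end Approx

def EntailsAt (M : Struct.{u} V) (s : ℕ → M.Dom) : Bool → SCLFormula V → SCLFormula V → Prop
  | true, φ, ψ => FOSat M s φ → FOSat M s ψ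
  | false, φ, ψ => FOSat M s ψ → FOSat M s φ

theorem approxCore_entailsAt (M : Struct.{u} V)
    {k k' : (ℕ → Option (SCLFormula V)) → Bool → ℕ → SCLFormula V}
    (hk : ∀ e b L s, EntailsAt M s b (k e b L) (k' e b L)) (ψ : SCLFormula V) :
    ∀ e b s, EntailsAt M s b (approxCore k e b ψ) (approxCore k' e b ψ) := by
  induction ψ with
  | bot | eq | rel => intro e b s; cases b <;> exact id
  | claim L => exact fun e b s => hk e b L s
  | not φ ih => intro e b s; cases b; exacts [mt (ih e true s), mt (ih e false s)]
  | and φ ψ ihφ ihψ =>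
    intro e b s; have := ihφ e b s; have := ihψ e b s; cases b <;> exact And.imp ‹_› ‹_›
  | or φ ψ ihφ ihψ =>
    intro e b s; have := ihφ e b s; have := ihψ e b s; cases b <;> exact Or.imp ‹_› ‹_›
  | ex x φ ih =>
    intro e b s; have := fun a => ih e b (Function.update s x a)
    cases b <;> exact Exists.imp ‹_›
  | all x φ ih =>
    intro e b s; have := fun a => ih e b (Function.update s x a)
    cases b <;> exact forall_imp ‹_›
  | lab L φ ih => exact fun e => ih _

theorem approx_entailsAt_succ (M : Struct.{u} V) (n : ℕ) (ψ : SCLFormula V) :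
    ∀ e b s, EntailsAt M s b (approx n e b ψ) (approx (n + 1) e b ψ) := by
  induction n generalizing ψ with
  | zero =>
    refine approxCore_entailsAt M (fun e b L s => ?_) ψ
    cases b <;> simp [EntailsAt, FOSat]
  | succ n ih =>
    refine approxCore_entailsAt M (fun e b L s => ?_) ψ
    cases h : e L with
    | none => cases b <;> exact id
    | some χ => exact ih χ e b s

theorem monotone_foSat_approx (M : Struct.{u} V) (e : ℕ → Option (SCLFormula V))
    (s : ℕ → M.Dom) (ψ : SCLFormula V) : Monotone fun n => FOSat M s (approx n e true ψ) :=
  monotone_nat_of_le_succ fun n => approx_entailsAt_succ M n ψ e true s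

def ApproxAgrees (M : Struct.{u} V) (p : SCLPos V M.Dom) (n : ℕ) : Prop :=
  FOSat M p.asg (approx n p.env p.pol p.form) ↔ p.pol = true

section ApproxAgrees

variable {M : Struct.{u} V} {p : SCLPos V M.Dom} {n : ℕ}

theorem approxAgrees_iff_posWin (hd : ∀ q, ¬ BStep M (p, n) q) :
    ApproxAgrees M p n ↔ posWin M p .eloise := by
  obtain ⟨ψ, e, s, b⟩ := p
  have a : M.Dom := Classical.arbitrary _
  cases ψ with
  | bot | eq | rel => simp [ApproxAgrees, posWin, atomSat, FOSat, SCLFormula.IsFOAtom]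
  | claim L =>
    suffices FOSat M s (approx n e b (.claim L)) ↔ b = false by
      cases b <;> simp [ApproxAgrees, posWin, SCLFormula.IsFOAtom, this]
    rcases n with _ | k
    · cases b <;> simp [FOSat]
    rcases he : e L with _ | χ
    · cases b <;> simp [FOSat, he]
    · exact (hd _ (.claimStep L e s b χ k he)).elim
  | not φ => exact (hd _ (.neg φ e s b n)).elim
  | and φ ψ => exact (hd _ (.andLeft φ ψ e s b n)).elim
  | or φ ψ => exact (hd _ (.orLeft φ ψ e s b n)).elim
  | ex x φ => exact (hd _ (.exStep x φ e s b n a)).elim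
  | all x φ => exact (hd _ (.allStep x φ e s b n a)).elim
  | lab L φ => exact (hd _ (.labStep L φ e s b n)).elim

theorem approxAgrees_iff_exists_bStep (ht : posTurn p = .eloise)
    (hex : ∃ q, BStep M (p, n) q) :
    ApproxAgrees M p n ↔ ∃ q, BStep M (p, n) q ∧ ApproxAgrees M q.1 q.2 := by
  refine ⟨fun h => ?_, fun ⟨q, hstep, hq⟩ => ?_⟩
  · obtain ⟨ψ, e, s, b⟩ := p
    cases ψ with
    | bot | eq | rel => obtain ⟨q, hq⟩ := hex; cases hq
    | claim L =>
      obtain ⟨q, hq⟩ := hex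
      cases hq with
      | claimStep _ _ _ _ χ k he =>
        exact ⟨_, .claimStep L e s b χ k he, by simpa [ApproxAgrees, he] using h⟩
    | not φ => exact ⟨_, .neg φ e s b n, by cases b <;> simpa [ApproxAgrees, FOSat] using h⟩
    | lab L φ => exact ⟨_, .labStep L φ e s b n, by simpa [ApproxAgrees] using h⟩
    | and φ ψ =>
      cases b <;> simp only [posTurn, reduceCtorEq] at ht
      simp only [ApproxAgrees, approx_and, FOSat, Bool.false_eq_true, iff_false, not_and] at h
      by_cases hφ : FOSat M s (approx n e false φ)
      · exact ⟨_, .andRight φ ψ e s false n, by simpa [ApproxAgrees] using h hφ⟩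
      · exact ⟨_, .andLeft φ ψ e s false n, by simpa [ApproxAgrees] using hφ⟩
    | or φ ψ =>
      cases b <;> simp only [posTurn, reduceCtorEq] at ht
      simp only [ApproxAgrees, approx_or, FOSat, iff_true] at h
      rcases h with hφ | hψ
      · exact ⟨_, .orLeft φ ψ e s true n, by simpa [ApproxAgrees] using hφ⟩
      · exact ⟨_, .orRight φ ψ e s true n, by simpa [ApproxAgrees] using hψ⟩
    | ex x φ =>
      cases b <;> simp only [posTurn, reduceCtorEq] at ht
      obtain ⟨a, ha⟩ : ∃ a, FOSat M (Function.update s x a) (approx n e true φ) := by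
        simpa [ApproxAgrees, FOSat] using h
      exact ⟨_, .exStep x φ e s true n a, by simpa [ApproxAgrees] using ha⟩
    | all x φ =>
      cases b <;> simp only [posTurn, reduceCtorEq] at ht
      obtain ⟨a, ha⟩ : ∃ a, ¬ FOSat M (Function.update s x a) (approx n e false φ) := by
        simpa [ApproxAgrees, FOSat] using h
      exact ⟨_, .allStep x φ e s false n a, by simpa [ApproxAgrees] using ha⟩
  · obtain ⟨ψ, e, s, b⟩ := p
    cases b <;> cases hstep <;> simp_all [ApproxAgrees, posTurn, FOSat] <;> exact ⟨_, hq⟩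

theorem approxAgrees_iff_forall_bStep (ht : posTurn p ≠ .eloise) :
    ApproxAgrees M p n ↔ ∀ q, BStep M (p, n) q → ApproxAgrees M q.1 q.2 := by
  obtain ⟨ψ, e, s, b⟩ := p
  refine ⟨fun h q hstep => ?_, fun hall => ?_⟩
  · cases b <;> cases hstep <;> simp_all [ApproxAgrees, posTurn, FOSat]
  · cases ψ <;> cases b <;> simp only [posTurn, ne_eq, not_true_eq_false] at ht <;>
      simp only [ApproxAgrees, approx_and, approx_or, approx_ex, approx_all, FOSat, iff_true,
        Bool.false_eq_true, iff_false, not_or, not_exists]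
    case and.true =>
      exact ⟨by simpa [ApproxAgrees] using hall _ (.andLeft _ _ e s true n),
        by simpa [ApproxAgrees] using hall _ (.andRight _ _ e s true n)⟩
    case or.false =>
      exact ⟨by simpa [ApproxAgrees] using hall _ (.orLeft _ _ e s false n),
        by simpa [ApproxAgrees] using hall _ (.orRight _ _ e s false n)⟩
    case ex.false => exact fun a => by simpa [ApproxAgrees] using hall _ (.exStep _ _ e s false n a)
    case all.true => exact fun a => by simpa [ApproxAgrees] using hall _ (.allStep _ _ e s true n a)

end ApproxAgrees

section Omega

variable {M : Struct.{u} V} {φ : SCLFormula V} {s : ℕ → M.Dom}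

noncomputable def goRank {D : Type u} : GOPos V D → ℕ × ℕ × ℕ
  | .start => (2, 0, 0)
  | .mid _ => (1, 0, 0)
  | .inner p k => (0, k, sizeOf p.form)

theorem goRank_lt_of_goStep {a b : GOPos V M.Dom} (h : GOStep M φ s a b) :
    Prod.Lex (· < ·) (Prod.Lex (· < ·) (· < ·)) (goRank b) (goRank a) := by
  rcases h with _ | _ | ⟨p, q, m, k, hb⟩
  · exact .left _ _ one_lt_two
  · exact .left _ _ zero_lt_one
  · refine .right _ ?_
    cases hb
    case claimStep => exact .left _ _ (Nat.lt_succ_self _)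
    all_goals exact .right _ (by simp <;> omega)

theorem wellFounded_gameOmega : WellFounded (flip (gameOmega M φ s).edge) :=
  Subrelation.wf goRank_lt_of_goStep
    (InvImage.wf goRank (wellFounded_lt.prod_lex (wellFounded_lt.prod_lex wellFounded_lt)))

theorem goStep_start_iff {x : GOPos V M.Dom} : GOStep M φ s .start x ↔ ∃ n', x = .mid n' :=
  ⟨fun h => by cases h with | abelardPick n' => exact ⟨n', rfl⟩,
    by rintro ⟨n', rfl⟩; exact .abelardPick n'⟩

theorem goStep_mid_iff {n' : ℕ} {x : GOPos V M.Dom} :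
    GOStep M φ s (.mid n') x ↔ ∃ n, n' ≤ n ∧ x = .inner (initPos φ s) n :=
  ⟨fun h => by cases h with | eloisePick _ n h => exact ⟨n, h, rfl⟩,
    by rintro ⟨n, h, rfl⟩; exact .eloisePick n' n h⟩

theorem goStep_inner_iff {p : SCLPos V M.Dom} {k : ℕ} {x : GOPos V M.Dom} :
    GOStep M φ s (.inner p k) x ↔ ∃ q, BStep M (p, k) q ∧ .inner q.1 q.2 = x :=
  ⟨fun h => by cases h with | play _ q _ k' h => exact ⟨(q, k'), h, rfl⟩,
    by rintro ⟨q, h, rfl⟩; exact .play _ _ _ _ h⟩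

variable (M φ s) in
def omegaRegion : GOPos V M.Dom → Prop
  | .start => ∀ n', ∃ n, n' ≤ n ∧ ApproxAgrees M (initPos φ s) n
  | .mid n' => ∃ n, n' ≤ n ∧ ApproxAgrees M (initPos φ s) n
  | .inner p k => ApproxAgrees M p k

theorem bndTrue_iff_frequently_approxAgrees :
    BndTrue M s φ ↔ ∀ n', ∃ n, n' ≤ n ∧ ApproxAgrees M (initPos φ s) n := by
  refine GameArena.hasWinningStrategy_eloise_iff wellFounded_gameOmega (omegaRegion M φ s)
    (fun v hd => ?_) (fun v ht hex => ?_) (fun v ht => ?_) .start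
  · rcases v with _ | n' | ⟨p, k⟩
    · exact (hd _ (.abelardPick 0)).elim
    · exact (hd _ (.eloisePick n' n' le_rfl)).elim
    · exact approxAgrees_iff_posWin fun q hq => hd _ (.play _ _ _ _ hq)
  · rcases v with _ | n' | ⟨p, k⟩
    · simp [gameOmega, goTurn] at ht
    · simp [gameOmega, omegaRegion, goStep_mid_iff]
    · simp only [gameOmega, goTurn, goStep_inner_iff] at ht hex
      simpa [gameOmega, omegaRegion, goStep_inner_iff] using
        approxAgrees_iff_exists_bStep ht (by simpa using hex)
  · rcases v with _ | n' | ⟨p, k⟩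
    · simp [gameOmega, omegaRegion, goStep_start_iff]
    · exact absurd rfl ht
    · rw [omegaRegion, approxAgrees_iff_forall_bStep ht]
      exact ⟨fun h x hx => by obtain ⟨q, hq, rfl⟩ := goStep_inner_iff.1 hx; exact h q hq,
        fun h q hq => h _ (.play _ _ _ _ hq)⟩

end Omega

theorem approxAgrees_initPos_iff {M : Struct.{u} V} {φ : SCLFormula V} {s : ℕ → M.Dom} {n : ℕ} :
    ApproxAgrees M (initPos φ s) n ↔ FOSat M s (approximant φ n) := by
  simp [ApproxAgrees, initPos, approximant]

theorem bndTrue_iff_exists_approximant (M : Struct.{u} V) (s : ℕ → M.Dom) (φ : SCLFormula V) :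
    BndTrue M s φ ↔ ∃ n, FOSat M s (approximant φ n) := by
  simp only [bndTrue_iff_frequently_approxAgrees, approxAgrees_initPos_iff]
  exact ⟨fun h => (h 0).imp fun _ => And.right, fun ⟨n₀, h₀⟩ n' =>
    ⟨max n' n₀, le_max_left _ _, monotone_foSat_approx M _ s φ (le_max_right _ _) h₀⟩⟩

section Compactness

open FirstOrder Language

def Vocab.lang (V : Vocab) : FirstOrder.Language.{0, 0} where
  Functions _ := Empty
  Relations n := { R : V.Rel // V.arity R = n }

@[reducible] def Struct.toLangStructure (M : Struct.{u} V) : V.lang.Structure M.Dom where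
  funMap f := f.elim
  RelMap r xs := M.interp r.1 fun i => xs (Fin.cast r.2 i)

/-- `m` sends each variable to a free variable (`inl`) or a bound de Bruijn level (`inr`);
`bindVar m x` rebinds `x` to the newest level. -/
def bindVar {k : ℕ} (m : ℕ → ℕ ⊕ Fin k) (x : ℕ) (y : ℕ) : ℕ ⊕ Fin (k + 1) :=
  if y = x then .inr (Fin.last k) else (m y).map id Fin.castSucc

def toFO : {k : ℕ} → (ℕ → ℕ ⊕ Fin k) → SCLFormula V → V.lang.BoundedFormula ℕ k
  | _, _, .bot => ⊥
  | _, m, .eq x y => Term.bdEqual (.var (m x)) (.var (m y))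
  | _, m, .rel R a =>
      Relations.boundedFormula (L := V.lang) (⟨R, rfl⟩ : V.lang.Relations (V.arity R))
        fun i => .var (m (a i))
  | _, _, .claim _ => ⊥
  | _, m, .not φ => ∼(toFO m φ)
  | _, m, .and φ ψ => toFO m φ ⊓ toFO m ψ
  | _, m, .or φ ψ => toFO m φ ⊔ toFO m ψ
  | _, m, .ex x φ => (toFO (bindVar m x) φ).ex
  | _, m, .all x φ => (toFO (bindVar m x) φ).all
  | _, m, .lab _ φ => toFO m φ

theorem sumElim_snoc_bindVar {D : Type u} {k : ℕ} (m : ℕ → ℕ ⊕ Fin k) (x : ℕ) (v : ℕ → D)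
    (xs : Fin k → D) (a : D) :
    (fun y => Sum.elim v (Fin.snoc xs a) (bindVar m x y)) =
      Function.update (fun y => Sum.elim v xs (m y)) x a := by
  funext y
  by_cases hy : y = x
  · subst hy
    simp [bindVar]
  · rcases hm : m y with z | i <;> simp [bindVar, hy, hm]

theorem realize_toFO (M : Struct.{u} V) [V.lang.Structure M.Dom]
    (hM : ∀ (R : V.Rel) xs, Structure.RelMap (L := V.lang) (⟨R, rfl⟩ : V.lang.Relations _) xs ↔
      M.interp R xs)
    (ψ : SCLFormula V) {k : ℕ} (m : ℕ → ℕ ⊕ Fin k) (v : ℕ → M.Dom) (xs : Fin k → M.Dom) :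
    (toFO m ψ).Realize v xs ↔ FOSat M (fun y => Sum.elim v xs (m y)) ψ := by
  induction ψ generalizing k with
  | bot | claim => simp [toFO, FOSat]
  | eq x y => simp [toFO, FOSat, Term.realize]
  | rel R a => exact hM R _
  | not φ ih => simp only [toFO, BoundedFormula.realize_not, FOSat, ih]
  | and φ ψ ihφ ihψ => simp only [toFO, BoundedFormula.realize_inf, FOSat, ihφ, ihψ]
  | or φ ψ ihφ ihψ => simp only [toFO, BoundedFormula.realize_sup, FOSat, ihφ, ihψ]
  | ex x φ ih => simp only [toFO, BoundedFormula.realize_ex, FOSat, ih, sumElim_snoc_bindVar]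
  | all x φ ih => simp only [toFO, BoundedFormula.realize_all, FOSat, ih, sumElim_snoc_bindVar]
  | lab L φ ih => exact ih m xs

/-- Otherwise the ultraproduct of countermodels `M_n ⊭ ψ n` along a nonprincipal ultrafilter
satisfies some `ψ n`, hence by Łoś so do almost all `M_i`, whereas `M_i ⊭ ψ n` for all `i ≥ n`. -/
theorem exists_foValid_of_monotone (ψ : ℕ → SCLFormula V)
    (hmono : ∀ (M : Struct.{u} V) s, Monotone fun n => FOSat M s (ψ n))
    (hcover : ∀ (M : Struct.{u} V) s, ∃ n, FOSat M s (ψ n)) : ∃ n, FOValid.{u} (ψ n) := by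
  by_contra! hno
  simp only [FOValid, not_forall] at hno
  choose Mf sf hMf using hno
  let _ := fun i => (Mf i).toLangStructure
  let 𝒰 := Filter.hyperfilter ℕ
  let N : Struct.{u} V :=
    ⟨(𝒰 : Filter ℕ).Product fun i => (Mf i).Dom, inferInstance,
      fun R xs => Structure.RelMap (L := V.lang) (⟨R, rfl⟩ : V.lang.Relations _) xs⟩
  obtain ⟨n, hn⟩ := hcover N fun y => ((fun i => sf i y : ∀ i, (Mf i).Dom) : N.Dom)
  have hlos : ∀ᶠ i in (𝒰 : Filter ℕ), (toFO .inl (ψ n)).Realize (sf i) default :=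
    (Ultraproduct.realize_formula_cast (toFO .inl (ψ n)) fun y i => sf i y).1
      ((realize_toFO N (fun _ _ => Iff.rfl) (ψ n) .inl _ default).2 hn)
  refine Filter.notMem_hyperfilter_of_finite (Set.finite_Iio n) (Filter.mem_of_superset hlos ?_)
  intro i hi
  by_contra hin
  exact hMf i (hmono (Mf i) (sf i) (not_lt.1 hin)
    ((realize_toFO (Mf i) (fun _ _ => Iff.rfl) (ψ n) .inl (sf i) default).1 hi))

end Compactness

end

/-- A BndSCL formula is valid under bounded semantics iff
some first-order approximant `Φⁿ_φ` is valid. -/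
theorem bndscl_valid_iff_some_approximant_valid {V : Vocab} (φ : SCLFormula V) :
    BndValid.{u} φ ↔ ∃ n : ℕ, FOValid.{u} (approximant φ n) := by
  refine ⟨fun h => ?_, fun ⟨n, hn⟩ M s => (bndTrue_iff_exists_approximant M s φ).2 ⟨n, hn M s⟩⟩
  exact exists_foValid_of_monotone (approximant φ) (fun M s => monotone_foSat_approx M _ s φ)
    fun M s => (bndTrue_iff_exists_approximant M s φ).1 (h M s)
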